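/- Let i, v : [0,1] × ℝ → ℝ be smooth (at least C²) and satisfy the telegrapher's equations L·∂i/∂t = −∂v/∂z − R·i and C·∂v/∂t = −∂i/∂z − G·v on [0,1] × ℝ, with constants L, C, R, G > 0. Assume (a) (∂i/∂t)(0,t) = (∂i/∂t)(1,t) = 0 for all t (zero boundary energy flow), and (b) for all t, ∫₀¹ (∂²v/∂z∂t)² dz ≤ (G²·L/C)·∫₀¹ (∂v/∂t)² dz (the condition √(C/L)/G·‖∂/∂z‖ ≤ 1). Then the shaped mixed potential P̃(t) = ∫₀¹ ( (R/2)·i² + (G/2)·v² + v·(∂i/∂z) + (1/G)·(∂i/∂z)² ) dz is nonincreasing in t: dP̃/dt ≤ 0 for all t. -/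

import Mathlib

/-!
Differentiating under the integral sign and eliminating `R i` and `G v` with the telegrapher's
equations, the time derivative of the density of `P̃` becomes
`-L iₜ² - C vₜ² + (2C/G) v_zt iₜ - ∂_z ((v + (2C/G) vₜ) iₜ)`.
The last term integrates to zero because `iₜ` vanishes at both ends, and completing the square
gives `-L iₜ² + (2C/G) v_zt iₜ ≤ C²/(G²L) v_zt²`. Hence
`dP̃/dt ≤ C²/(G²L) ∫ v_zt² - C ∫ vₜ²`, which is nonpositive by the operator-norm condition.
-/

open Function MeasureTheory Set

noncomputable section

def partialFst (f : ℝ → ℝ → ℝ) (z t : ℝ) : ℝ := deriv (fun w => f w t) z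

def partialSnd (f : ℝ → ℝ → ℝ) (z t : ℝ) : ℝ := deriv (f z) t

def shapedPotentialDensity (R G : ℝ) (i v : ℝ → ℝ → ℝ) (z τ : ℝ) : ℝ :=
  R / 2 * i z τ ^ 2 + G / 2 * v z τ ^ 2 + v z τ * partialFst i z τ + 1 / G * partialFst i z τ ^ 2

end

section Slices

variable {E : Type*} [NormedAddCommGroup E] [NormedSpace ℝ E] {φ : ℝ × ℝ → E}
  {φ' : ℝ × ℝ →L[ℝ] E} {z t : ℝ}

theorem HasFDerivAt.hasDerivAt_slice_fst (h : HasFDerivAt φ φ' (z, t)) :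
    HasDerivAt (fun w => φ (w, t)) (φ' (1, 0)) z := by
  simpa [comp_def] using h.comp_hasDerivAt z ((hasDerivAt_id z).prodMk (hasDerivAt_const z t))

theorem HasFDerivAt.hasDerivAt_slice_snd (h : HasFDerivAt φ φ' (z, t)) :
    HasDerivAt (fun τ => φ (z, τ)) (φ' (0, 1)) t := by
  simpa [comp_def] using h.comp_hasDerivAt t ((hasDerivAt_const t z).prodMk (hasDerivAt_id t))

end Slices

section PartialDerivatives

variable {f : ℝ → ℝ → ℝ}

theorem hasDerivAt_partialFst (hf : Differentiable ℝ (uncurry f)) (z t : ℝ) :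
    HasDerivAt (fun w => f w t) (partialFst f z t) z :=
  (hf (z, t)).hasFDerivAt.hasDerivAt_slice_fst.differentiableAt.hasDerivAt

theorem hasDerivAt_partialSnd (hf : Differentiable ℝ (uncurry f)) (z t : ℝ) :
    HasDerivAt (f z) (partialSnd f z t) t :=
  (hf (z, t)).hasFDerivAt.hasDerivAt_slice_snd.differentiableAt.hasDerivAt

theorem partialFst_eq_fderiv (hf : Differentiable ℝ (uncurry f)) (z t : ℝ) :
    partialFst f z t = fderiv ℝ (uncurry f) (z, t) (1, 0) :=
  (hf (z, t)).hasFDerivAt.hasDerivAt_slice_fst.deriv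

theorem partialSnd_eq_fderiv (hf : Differentiable ℝ (uncurry f)) (z t : ℝ) :
    partialSnd f z t = fderiv ℝ (uncurry f) (z, t) (0, 1) :=
  (hf (z, t)).hasFDerivAt.hasDerivAt_slice_snd.deriv

variable {m n : WithTop ℕ∞}

theorem ContDiff.uncurry_partialFst (hf : ContDiff ℝ n (uncurry f)) (hmn : m + 1 ≤ n) :
    ContDiff ℝ m (uncurry (partialFst f)) := by
  have hd : Differentiable ℝ (uncurry f) := hf.differentiable (by rintro rfl; simp at hmn)
  have : uncurry (partialFst f) = fun p => fderiv ℝ (uncurry f) p (1, 0) :=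
    funext fun p => partialFst_eq_fderiv hd p.1 p.2
  exact this ▸ (hf.fderiv_right hmn).clm_apply contDiff_const

theorem ContDiff.uncurry_partialSnd (hf : ContDiff ℝ n (uncurry f)) (hmn : m + 1 ≤ n) :
    ContDiff ℝ m (uncurry (partialSnd f)) := by
  have hd : Differentiable ℝ (uncurry f) := hf.differentiable (by rintro rfl; simp at hmn)
  have : uncurry (partialSnd f) = fun p => fderiv ℝ (uncurry f) p (0, 1) :=
    funext fun p => partialSnd_eq_fderiv hd p.1 p.2
  exact this ▸ (hf.fderiv_right hmn).clm_apply contDiff_const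

theorem partialFst_partialSnd (hf : ContDiff ℝ 2 (uncurry f)) (z t : ℝ) :
    partialFst (partialSnd f) z t = partialSnd (partialFst f) z t := by
  have hd : Differentiable ℝ (uncurry f) := hf.differentiable (by norm_num)
  have hd2 : HasFDerivAt (fderiv ℝ (uncurry f)) (fderiv ℝ (fderiv ℝ (uncurry f)) (z, t)) (z, t) :=
    ((hf.fderiv_right (m := 1) (by norm_num)).differentiable one_ne_zero (z, t)).hasFDerivAt
  have hfst := hd2.hasDerivAt_slice_fst.clm_apply (hasDerivAt_const z ((0 : ℝ), (1 : ℝ)))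
  have hsnd := hd2.hasDerivAt_slice_snd.clm_apply (hasDerivAt_const t ((1 : ℝ), (0 : ℝ)))
  show deriv (fun w => partialSnd f w t) z = deriv (fun τ => partialFst f z τ) t
  simp only [partialSnd_eq_fderiv hd, partialFst_eq_fderiv hd, hfst.deriv, hsnd.deriv, map_zero,
    add_zero]
  exact (hf.contDiffAt.isSymmSndFDerivAt (by simp)).eq _ _

end PartialDerivatives

theorem hasDerivAt_intervalIntegral_partialSnd {F : ℝ → ℝ → ℝ} (hF : ContDiff ℝ 1 (uncurry F))
    (a b t : ℝ) :
    HasDerivAt (fun τ => ∫ z in a..b, F z τ) (∫ z in a..b, partialSnd F z t) t := by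
  have hF' : Continuous (uncurry (partialSnd F)) :=
    (hF.uncurry_partialSnd (m := 0) (by simp)).continuous
  obtain ⟨M, hM⟩ := (isCompact_uIcc.prod (isCompact_closedBall t 1)).exists_bound_of_continuousOn
    hF'.continuousOn
  refine (intervalIntegral.hasDerivAt_integral_of_dominated_loc_of_deriv_le (bound := fun _ => M)
    (Metric.ball_mem_nhds t one_pos)
    (Filter.Eventually.of_forall fun τ => (hF.continuous.uncurry_right τ).aestronglyMeasurable)
    ((hF.continuous.uncurry_right t).intervalIntegrable a b)
    (hF'.uncurry_right t).aestronglyMeasurable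
    (ae_of_all _ fun z hz τ hτ => hM (z, τ) ⟨uIoc_subset_uIcc hz, Metric.ball_subset_closedBall hτ⟩)
    intervalIntegrable_const
    (ae_of_all _ fun z _ τ _ => hasDerivAt_partialSnd (hF.differentiable one_ne_zero) z τ)).2

theorem telegrapher_dissipation_le {L C R G i v it vt iz vz izt vtz : ℝ} (hL : 0 < L) (hG : G ≠ 0)
    (h1 : L * it = -vz - R * i) (h2 : C * vt = -iz - G * v) :
    R * i * it + G * v * vt + (vt * iz + v * izt) + 2 / G * iz * izt ≤
      C ^ 2 / (G ^ 2 * L) * vtz ^ 2 - C * vt ^ 2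
        - ((vz + 2 * C / G * vtz) * it + (v + 2 * C / G * vt) * izt) := by
  have gap : C ^ 2 / (G ^ 2 * L) * vtz ^ 2 - C * vt ^ 2
        - ((vz + 2 * C / G * vtz) * it + (v + 2 * C / G * vt) * izt)
        - (R * i * it + G * v * vt + (vt * iz + v * izt) + 2 / G * iz * izt)
      = (L * it - C / G * vtz) ^ 2 / L := by
    field_simp
    linear_combination (-(G ^ 2 * L * it)) * h1 - (G ^ 2 * L * vt + 2 * G * L * izt) * h2
  have : 0 ≤ (L * it - C / G * vtz) ^ 2 / L := by positivity
  linarith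

section ShapedPotential

variable {L C R G : ℝ} {i v : ℝ → ℝ → ℝ}

theorem contDiff_uncurry_shapedPotentialDensity (hi : ContDiff ℝ 2 (uncurry i))
    (hv : ContDiff ℝ 2 (uncurry v)) : ContDiff ℝ 1 (uncurry (shapedPotentialDensity R G i v)) := by
  have hi' : ContDiff ℝ 1 (uncurry i) := hi.of_le (by norm_num)
  have hv' : ContDiff ℝ 1 (uncurry v) := hv.of_le (by norm_num)
  have hiz : ContDiff ℝ 1 (uncurry (partialFst i)) := hi.uncurry_partialFst (by norm_num)
  show ContDiff ℝ 1 fun p => R / 2 * uncurry i p ^ 2 + G / 2 * uncurry v p ^ 2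
    + uncurry v p * uncurry (partialFst i) p + 1 / G * uncurry (partialFst i) p ^ 2
  fun_prop

theorem partialSnd_shapedPotentialDensity (hi : ContDiff ℝ 2 (uncurry i))
    (hv : ContDiff ℝ 2 (uncurry v)) (z t : ℝ) :
    partialSnd (shapedPotentialDensity R G i v) z t =
      R * i z t * partialSnd i z t + G * v z t * partialSnd v z t
        + (partialSnd v z t * partialFst i z t + v z t * partialSnd (partialFst i) z t)
        + 2 / G * partialFst i z t * partialSnd (partialFst i) z t := by
  have hit := hasDerivAt_partialSnd (hi.differentiable two_ne_zero) z t
  have hvt := hasDerivAt_partialSnd (hv.differentiable two_ne_zero) z t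
  have hizt := hasDerivAt_partialSnd
    ((hi.uncurry_partialFst (m := 1) (by norm_num)).differentiable one_ne_zero) z t
  have h := ((((hit.pow 2).const_mul (R / 2)).add ((hvt.pow 2).const_mul (G / 2))).add
    (hvt.mul hizt)).add ((hizt.pow 2).const_mul (1 / G))
  exact (h.congr_deriv (by ring)).deriv

theorem partialSnd_shapedPotentialDensity_le (hL : 0 < L) (hG : G ≠ 0)
    (hi : ContDiff ℝ 2 (uncurry i)) (hv : ContDiff ℝ 2 (uncurry v)) {z t : ℝ}
    (h1 : L * partialSnd i z t = -partialFst v z t - R * i z t)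
    (h2 : C * partialSnd v z t = -partialFst i z t - G * v z t) :
    partialSnd (shapedPotentialDensity R G i v) z t ≤
      C ^ 2 / (G ^ 2 * L) * partialFst (partialSnd v) z t ^ 2 - C * partialSnd v z t ^ 2
        - ((partialFst v z t + 2 * C / G * partialFst (partialSnd v) z t) * partialSnd i z t
          + (v z t + 2 * C / G * partialSnd v z t) * partialFst (partialSnd i) z t) := by
  rw [partialSnd_shapedPotentialDensity hi hv, ← partialFst_partialSnd hi]
  exact telegrapher_dissipation_le hL hG h1 h2

theorem integral_deriv_flux_eq_zero (c : ℝ) (hi : ContDiff ℝ 2 (uncurry i))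
    (hv : ContDiff ℝ 2 (uncurry v)) {t : ℝ} (hi₀ : partialSnd i 0 t = 0)
    (hi₁ : partialSnd i 1 t = 0) :
    ∫ z in (0 : ℝ)..1,
      (partialFst v z t + c * partialFst (partialSnd v) z t) * partialSnd i z t
        + (v z t + c * partialSnd v z t) * partialFst (partialSnd i) z t = 0 := by
  have hvt := hv.uncurry_partialSnd (m := 1) (by norm_num)
  have hit := hi.uncurry_partialSnd (m := 1) (by norm_num)
  have cvz := (hv.uncurry_partialFst (m := 0) (by norm_num)).continuous.uncurry_right t
  have cvtz := (hvt.uncurry_partialFst (m := 0) (by norm_num)).continuous.uncurry_right t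
  have citz := (hit.uncurry_partialFst (m := 0) (by norm_num)).continuous.uncurry_right t
  rw [intervalIntegral.integral_deriv_mul_eq_sub (u := fun z => v z t + c * partialSnd v z t)
    (fun z _ => (hasDerivAt_partialFst (hv.differentiable two_ne_zero) z t).add
      ((hasDerivAt_partialFst (hvt.differentiable one_ne_zero) z t).const_mul c))
    (fun z _ => hasDerivAt_partialFst (hit.differentiable one_ne_zero) z t)
    (Continuous.intervalIntegrable (by fun_prop) _ _) (citz.intervalIntegrable _ _)]
  simp [hi₀, hi₁]

theorem integral_partialSnd_shapedPotentialDensity_nonpos (hL : 0 < L) (hG : G ≠ 0)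
    (hi : ContDiff ℝ 2 (uncurry i)) (hv : ContDiff ℝ 2 (uncurry v)) {t : ℝ}
    (h1 : ∀ z ∈ Icc (0 : ℝ) 1, L * partialSnd i z t = -partialFst v z t - R * i z t)
    (h2 : ∀ z ∈ Icc (0 : ℝ) 1, C * partialSnd v z t = -partialFst i z t - G * v z t)
    (hi₀ : partialSnd i 0 t = 0) (hi₁ : partialSnd i 1 t = 0)
    (hop : ∫ z in (0 : ℝ)..1, partialFst (partialSnd v) z t ^ 2
      ≤ G ^ 2 * L / C * ∫ z in (0 : ℝ)..1, partialSnd v z t ^ 2) :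
    ∫ z in (0 : ℝ)..1, partialSnd (shapedPotentialDensity R G i v) z t ≤ 0 := by
  have hvt := hv.uncurry_partialSnd (m := 1) (by norm_num)
  have hit := hi.uncurry_partialSnd (m := 1) (by norm_num)
  have cD := ((contDiff_uncurry_shapedPotentialDensity (R := R) (G := G) hi hv).uncurry_partialSnd
    (m := 0) (by norm_num)).continuous.uncurry_right t
  have cv := hv.continuous.uncurry_right t
  have cvz := (hv.uncurry_partialFst (m := 0) (by norm_num)).continuous.uncurry_right t
  have cvt := hvt.continuous.uncurry_right t
  have cvtz := (hvt.uncurry_partialFst (m := 0) (by norm_num)).continuous.uncurry_right t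
  have cit := hit.continuous.uncurry_right t
  have citz := (hit.uncurry_partialFst (m := 0) (by norm_num)).continuous.uncurry_right t
  calc ∫ z in (0 : ℝ)..1, partialSnd (shapedPotentialDensity R G i v) z t
      ≤ ∫ z in (0 : ℝ)..1, C ^ 2 / (G ^ 2 * L) * partialFst (partialSnd v) z t ^ 2
          - C * partialSnd v z t ^ 2
          - ((partialFst v z t + 2 * C / G * partialFst (partialSnd v) z t) * partialSnd i z t
            + (v z t + 2 * C / G * partialSnd v z t) * partialFst (partialSnd i) z t) :=
        intervalIntegral.integral_mono_on zero_le_one (cD.intervalIntegrable _ _)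
          (Continuous.intervalIntegrable (by fun_prop) _ _)
          fun z hz => partialSnd_shapedPotentialDensity_le hL hG hi hv (h1 z hz) (h2 z hz)
    _ = C ^ 2 / (G ^ 2 * L) * (∫ z in (0 : ℝ)..1, partialFst (partialSnd v) z t ^ 2)
          - C * ∫ z in (0 : ℝ)..1, partialSnd v z t ^ 2 := by
      rw [intervalIntegral.integral_sub (Continuous.intervalIntegrable (by fun_prop) _ _)
          (Continuous.intervalIntegrable (by fun_prop) _ _),
        intervalIntegral.integral_sub (Continuous.intervalIntegrable (by fun_prop) _ _)
          (Continuous.intervalIntegrable (by fun_prop) _ _),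
        intervalIntegral.integral_const_mul, intervalIntegral.integral_const_mul,
        integral_deriv_flux_eq_zero _ hi hv hi₀ hi₁, sub_zero]
    _ ≤ C ^ 2 / (G ^ 2 * L) * (G ^ 2 * L / C * ∫ z in (0 : ℝ)..1, partialSnd v z t ^ 2)
          - C * ∫ z in (0 : ℝ)..1, partialSnd v z t ^ 2 := by gcongr
    _ = 0 := by
      field_simp
      ring

end ShapedPotential

theorem shaped_potential_nonincreasing_general (L C R G : ℝ) (i v : ℝ → ℝ → ℝ)
    (hL : 0 < L) (hG : 0 < G)
    (hi : ContDiff ℝ 2 (Function.uncurry i)) (hv : ContDiff ℝ 2 (Function.uncurry v))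
    (heq1 : ∀ t : ℝ, ∀ z ∈ Set.Icc (0:ℝ) 1,
      L * deriv (i z) t = -(deriv (fun w => v w t) z) - R * i z t)
    (heq2 : ∀ t : ℝ, ∀ z ∈ Set.Icc (0:ℝ) 1,
      C * deriv (v z) t = -(deriv (fun w => i w t) z) - G * v z t)
    (hbd : ∀ t : ℝ, deriv (i 0) t = 0 ∧ deriv (i 1) t = 0)
    (hop : ∀ t : ℝ,
      (∫ z in (0:ℝ)..1, (deriv (fun w => deriv (v w) t) z) ^ 2)
        ≤ G ^ 2 * L / C * ∫ z in (0:ℝ)..1, (deriv (v z) t) ^ 2) :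
    ∀ t : ℝ,
      deriv (fun τ => ∫ z in (0:ℝ)..1,
          (R / 2 * (i z τ) ^ 2 + G / 2 * (v z τ) ^ 2
            + v z τ * deriv (fun w => i w τ) z
            + 1 / G * (deriv (fun w => i w τ) z) ^ 2)) t ≤ 0 := by
  intro t
  change deriv (fun τ => ∫ z in (0 : ℝ)..1, shapedPotentialDensity R G i v z τ) t ≤ 0
  rw [(hasDerivAt_intervalIntegral_partialSnd (contDiff_uncurry_shapedPotentialDensity hi hv)
    0 1 t).deriv]
  exact integral_partialSnd_shapedPotentialDensity_nonpos hL hG.ne' hi hv (heq1 t) (heq2 t)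
    (hbd t).1 (hbd t).2 (hop t)

/-- Under zero boundary energy flow `(∂i/∂t)(0,t) = (∂i/∂t)(1,t) = 0`
and the operator-norm condition
`∫₀¹ (∂²v/∂z∂t)² dz ≤ (G²L/C)·∫₀¹ (∂v/∂t)² dz` (i.e. `√(C/L)/G·‖∂/∂z‖ ≤ 1`),
the shaped potential `P̃(t)` of the transmission line is nonincreasing. -/
theorem shaped_potential_nonincreasing (L C R G : ℝ) (i v : ℝ → ℝ → ℝ)
    (hL : 0 < L) (hC : 0 < C) (hR : 0 < R) (hG : 0 < G)
    (hi : ContDiff ℝ 2 (Function.uncurry i)) (hv : ContDiff ℝ 2 (Function.uncurry v))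
    (heq1 : ∀ t : ℝ, ∀ z ∈ Set.Icc (0:ℝ) 1,
      L * deriv (i z) t = -(deriv (fun w => v w t) z) - R * i z t)
    (heq2 : ∀ t : ℝ, ∀ z ∈ Set.Icc (0:ℝ) 1,
      C * deriv (v z) t = -(deriv (fun w => i w t) z) - G * v z t)
    (hbd : ∀ t : ℝ, deriv (i 0) t = 0 ∧ deriv (i 1) t = 0)
    (hop : ∀ t : ℝ,
      (∫ z in (0:ℝ)..1, (deriv (fun w => deriv (v w) t) z) ^ 2)
        ≤ G ^ 2 * L / C * ∫ z in (0:ℝ)..1, (deriv (v z) t) ^ 2) :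
    ∀ t : ℝ,
      deriv (fun τ => ∫ z in (0:ℝ)..1,
          (R / 2 * (i z τ) ^ 2 + G / 2 * (v z τ) ^ 2
            + v z τ * deriv (fun w => i w τ) z
            + 1 / G * (deriv (fun w => i w τ) z) ^ 2)) t ≤ 0 :=
  shaped_potential_nonincreasing_general L C R G i v hL hG hi hv heq1 heq2 hbd hop
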